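/- If G is a finite simple graph without isolated vertices, then γ_Zg(G) ≤ γ_tg(G). -/

import Mathlib

/- Formalization of the domination games from "The variety of domination games".

A game is specified by a legality predicate `legal : List V → V → Prop`, where the list
records the previously played vertices (most recent first).  Players alternate moves;
each move must be legal; the game ends when no legal move exists.  Dominator wants to
minimize, Staller to maximize, the total number of moves.

`canEnd legal k turn h` states that, with history `h` and the player to move given by
`turn` (`true` = Dominator), Dominator can guarantee that at most `k` further moves are
played (against any play of Staller).  The value of the game under optimal play by both
players is then the least such `k` from the empty history. -/

/-- The closed neighborhood `N[v]` of a vertex. -/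
def closedNbhd {V : Type*} (G : SimpleGraph V) (v : V) : Set V :=
  insert v (G.neighborSet v)

/-- `⋃_{u ∈ h} N[u]` : the set of vertices dominated by the moves in `h`. -/
def dominatedBy {V : Type*} (G : SimpleGraph V) (h : List V) : Set V :=
  ⋃ u ∈ h, closedNbhd G u

/-- `⋃_{u ∈ h} N(u)` : the set of vertices totally dominated by the moves in `h`. -/
def totDominatedBy {V : Type*} (G : SimpleGraph V) (h : List V) : Set V :=
  ⋃ u ∈ h, G.neighborSet u

/-- Legality in the domination game: `N[v] \ ⋃_{j<i} N[v_j] ≠ ∅`. -/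
def dgLegal {V : Type*} (G : SimpleGraph V) (h : List V) (v : V) : Prop :=
  (closedNbhd G v \ dominatedBy G h).Nonempty

/-- Legality in the total domination game: `N(v) \ ⋃_{j<i} N(v_j) ≠ ∅`. -/
def tgLegal {V : Type*} (G : SimpleGraph V) (h : List V) (v : V) : Prop :=
  (G.neighborSet v \ totDominatedBy G h).Nonempty

/-- Legality in the Z-domination game on `G|A`: `N(v) \ (A ∪ ⋃_{j<i} N[v_j]) ≠ ∅`. -/
def zLegal {V : Type*} (G : SimpleGraph V) (A : Set V) (h : List V) (v : V) : Prop :=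
  (G.neighborSet v \ (A ∪ dominatedBy G h)).Nonempty

/-- Legality in the LL-domination game on `G|A`: `N[v] \ (A ∪ ⋃_{j<i} N(v_j)) ≠ ∅`. -/
def llLegal {V : Type*} (G : SimpleGraph V) (A : Set V) (h : List V) (v : V) : Prop :=
  (closedNbhd G v \ (A ∪ totDominatedBy G h)).Nonempty

/-- Legality in the L-domination game on `G|A`: as in the LL-game, and moreover no vertex
may be played twice. -/
def lLegal {V : Type*} (G : SimpleGraph V) (A : Set V) (h : List V) (v : V) : Prop :=
  llLegal G A h v ∧ v ∉ h

/-- `canEnd legal k turn h` : with previously played vertices `h` and the player to move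
given by `turn` (`true` = Dominator, `false` = Staller), Dominator has a strategy
guaranteeing that at most `k` further moves are made. -/
def canEnd {V : Type*} (legal : List V → V → Prop) : ℕ → Bool → List V → Prop
  | 0, _, h => ∀ v, ¬ legal h v
  | k+1, true, h => (∀ v, ¬ legal h v) ∨ ∃ v, legal h v ∧ canEnd legal k false (v :: h)
  | k+1, false, h => ∀ v, legal h v → canEnd legal k true (v :: h)

/-- The number of moves in the game with legality predicate `legal` when both players play
optimally (Dominator minimizing, Staller maximizing the number of moves); `dFirst = true`
means Dominator makes the first move. -/
noncomputable def gameVal {V : Type*} (legal : List V → V → Prop) (dFirst : Bool) : ℕ :=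
  sInf {k | canEnd legal k dFirst []}

/-- The game Z-domination number `γ_Zg(G|A)` (Dominator starts). -/
noncomputable def gammaZgA {V : Type*} (G : SimpleGraph V) (A : Set V) : ℕ :=
  gameVal (zLegal G A) true

/-- The Staller-start game Z-domination number `γ'_Zg(G|A)`. -/
noncomputable def gammaZgA' {V : Type*} (G : SimpleGraph V) (A : Set V) : ℕ :=
  gameVal (zLegal G A) false

/-- The game L-domination number `γ_Lg(G|A)` (Dominator starts). -/
noncomputable def gammaLgA {V : Type*} (G : SimpleGraph V) (A : Set V) : ℕ :=
  gameVal (lLegal G A) true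

/-- The Staller-start game L-domination number `γ'_Lg(G|A)`. -/
noncomputable def gammaLgA' {V : Type*} (G : SimpleGraph V) (A : Set V) : ℕ :=
  gameVal (lLegal G A) false

/-- The game LL-domination number `γ_LLg(G|A)` (Dominator starts). -/
noncomputable def gammaLLgA {V : Type*} (G : SimpleGraph V) (A : Set V) : ℕ :=
  gameVal (llLegal G A) true

/-- The Staller-start game LL-domination number `γ'_LLg(G|A)`. -/
noncomputable def gammaLLgA' {V : Type*} (G : SimpleGraph V) (A : Set V) : ℕ :=
  gameVal (llLegal G A) false

/-- The game domination number `γ_g(G)` (Dominator starts). -/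
noncomputable def gammaG {V : Type*} (G : SimpleGraph V) : ℕ :=
  gameVal (dgLegal G) true

/-- The game total domination number `γ_tg(G)` (Dominator starts). -/
noncomputable def gammaTg {V : Type*} (G : SimpleGraph V) : ℕ :=
  gameVal (tgLegal G) true

/-- The game Z-domination number `γ_Zg(G)` (Dominator starts). -/
noncomputable def gammaZg {V : Type*} (G : SimpleGraph V) : ℕ := gammaZgA G ∅

/-- The Staller-start game Z-domination number `γ'_Zg(G)`. -/
noncomputable def gammaZg' {V : Type*} (G : SimpleGraph V) : ℕ := gammaZgA' G ∅

/-- The game L-domination number `γ_Lg(G)` (Dominator starts). -/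
noncomputable def gammaLg {V : Type*} (G : SimpleGraph V) : ℕ := gammaLgA G ∅

/-- The Staller-start game L-domination number `γ'_Lg(G)`. -/
noncomputable def gammaLg' {V : Type*} (G : SimpleGraph V) : ℕ := gammaLgA' G ∅

/-- The game LL-domination number `γ_LLg(G)` (Dominator starts). -/
noncomputable def gammaLLg {V : Type*} (G : SimpleGraph V) : ℕ := gammaLLgA G ∅

/-- The Staller-start game LL-domination number `γ'_LLg(G)`. -/
noncomputable def gammaLLg' {V : Type*} (G : SimpleGraph V) : ℕ := gammaLLgA' G ∅

/-- `G` has no isolated vertices. -/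
def isolateFree {V : Type*} (G : SimpleGraph V) : Prop := ∀ v : V, ∃ u, G.Adj v u

/-- The domination number `γ(G)`. -/
noncomputable def domNum {V : Type*} (G : SimpleGraph V) : ℕ :=
  sInf {k | ∃ S : Finset V, S.card = k ∧ ∀ v : V, ∃ u ∈ S, v ∈ closedNbhd G u}

/-- The total domination number `γ_t(G)`. -/
noncomputable def totDomNum {V : Type*} (G : SimpleGraph V) : ℕ :=
  sInf {k | ∃ S : Finset V, S.card = k ∧ ∀ v : V, ∃ u ∈ S, G.Adj u v}


/- Dominator plays the Z-game by imagining a total domination game alongside it, keeping the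
invariant that every vertex totally dominated in the imagined game is dominated in the real one.
Then each legal Z-move is a legal move of the imagined game, and Staller's Z-moves are copied into
it. Dominator copies his optimal imagined move `v` when it is Z-legal; otherwise `N(v)` is already
dominated, so any Z-move preserves the invariant. Hence the Z-game ends no later than the imagined
one. Finiteness of `V` matters because a game that need not end has value `sInf ∅ = 0`; here every
total domination move totally dominates a new vertex, so that game lasts at most `|V|` moves. -/

namespace DominationGame

variable {V : Type*}

theorem canEnd_of_simulation {legal₁ legal₂ : List V → V → Prop} (R : List V → List V → Prop)
    (copy : ∀ h₁ h₂ v, R h₁ h₂ → legal₂ h₂ v → legal₁ h₁ v ∧ R (v :: h₁) (v :: h₂))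
    (respond : ∀ h₁ h₂ v, R h₁ h₂ → legal₁ h₁ v →
      (∀ w, ¬ legal₂ h₂ w) ∨ ∃ w, legal₂ h₂ w ∧ R (v :: h₁) (w :: h₂)) :
    ∀ (k : ℕ) (turn : Bool) (h₁ h₂ : List V), R h₁ h₂ →
      canEnd legal₁ k turn h₁ → canEnd legal₂ k turn h₂
  | 0, _, _, _, hR, hend => fun v hv => hend v (copy _ _ v hR hv).1
  | k + 1, true, h₁, h₂, hR, hend => by
    rcases hend with hstuck | ⟨v, hv, hend⟩
    · exact Or.inl fun w hw => hstuck w (copy _ _ w hR hw).1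
    · rcases respond h₁ h₂ v hR hv with hstuck | ⟨w, hw, hR'⟩
      · exact Or.inl hstuck
      · exact Or.inr ⟨w, hw, canEnd_of_simulation R copy respond k false _ _ hR' hend⟩
  | k + 1, false, _, _, hR, hend => fun v hv =>
    have ⟨hv₁, hR'⟩ := copy _ _ v hR hv
    canEnd_of_simulation R copy respond k true _ _ hR' (hend v hv₁)

theorem canEnd_of_potential {legal : List V → V → Prop} (f : List V → ℕ)
    (hf : ∀ h v, legal h v → f (v :: h) < f h) :
    ∀ (n : ℕ) (turn : Bool) (h : List V), f h ≤ n → canEnd legal n turn h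
  | 0, _, h, hn => fun v hv => by have := hf h v hv; omega
  | n + 1, true, h, hn => by
    by_cases hmove : ∃ v, legal h v
    · obtain ⟨v, hv⟩ := hmove
      exact Or.inr ⟨v, hv, canEnd_of_potential f hf n false _ (by have := hf h v hv; omega)⟩
    · exact Or.inl (not_exists.mp hmove)
  | n + 1, false, h, hn => fun v hv =>
    canEnd_of_potential f hf n true _ (by have := hf h v hv; omega)

end DominationGame

section

open DominationGame

variable {V : Type*} (G : SimpleGraph V)

lemma totDominatedBy_cons (v : V) (h : List V) :
    totDominatedBy G (v :: h) = G.neighborSet v ∪ totDominatedBy G h := by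
  simp [totDominatedBy]

lemma dominatedBy_cons (v : V) (h : List V) :
    dominatedBy G (v :: h) = closedNbhd G v ∪ dominatedBy G h := by
  simp [dominatedBy]

lemma ncard_compl_totDominatedBy_cons_lt [Finite V] {h : List V} {v : V}
    (hv : tgLegal G h v) :
    (totDominatedBy G (v :: h))ᶜ.ncard < (totDominatedBy G h)ᶜ.ncard := by
  obtain ⟨x, hxv, hxh⟩ := hv
  refine Set.ncard_lt_ncard ⟨?_, fun hsub => ?_⟩
  · exact Set.compl_subset_compl.mpr (totDominatedBy_cons G v h ▸ Set.subset_union_right)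
  · simpa [totDominatedBy_cons, hxv] using hsub hxh

lemma canEnd_tgLegal_card [Finite V] (turn : Bool) :
    canEnd (tgLegal G) (Nat.card V) turn [] :=
  canEnd_of_potential (fun h => (totDominatedBy G h)ᶜ.ncard)
    (fun _ _ hv => ncard_compl_totDominatedBy_cons_lt G hv) _ turn [] (Set.ncard_le_card _)

lemma totDominatedBy_cons_subset_dominatedBy_cons {ht hz : List V}
    (hR : totDominatedBy G ht ⊆ dominatedBy G hz) (v : V) :
    totDominatedBy G (v :: ht) ⊆ dominatedBy G (v :: hz) := by
  rw [totDominatedBy_cons, dominatedBy_cons]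
  exact Set.union_subset_union (Set.subset_insert _ _) hR

lemma tgLegal_of_zLegal {ht hz : List V} (hR : totDominatedBy G ht ⊆ dominatedBy G hz) {v : V}
    (hv : zLegal G ∅ hz v) : tgLegal G ht v :=
  let ⟨x, hxv, hxh⟩ := hv
  ⟨x, hxv, fun hx => hxh (Or.inr (hR hx))⟩

lemma neighborSet_subset_dominatedBy_of_not_zLegal {h : List V} {v : V}
    (hv : ¬ zLegal G ∅ h v) : G.neighborSet v ⊆ dominatedBy G h := fun x hx => by
  by_contra hx'
  exact hv ⟨x, hx, by simpa using hx'⟩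

lemma canEnd_zLegal_of_canEnd_tgLegal {k : ℕ} {turn : Bool}
    (hend : canEnd (tgLegal G) k turn []) : canEnd (zLegal G ∅) k turn [] := by
  refine canEnd_of_simulation (legal₁ := tgLegal G) (legal₂ := zLegal G ∅)
    (fun ht hz => totDominatedBy G ht ⊆ dominatedBy G hz)
    (fun ht hz v hR hv => ⟨tgLegal_of_zLegal G hR hv,
      totDominatedBy_cons_subset_dominatedBy_cons G hR v⟩)
    (fun ht hz v hR _ => ?_) k turn [] [] (by simp [totDominatedBy]) hend
  by_cases hv : zLegal G ∅ hz v
  · exact Or.inr ⟨v, hv, totDominatedBy_cons_subset_dominatedBy_cons G hR v⟩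
  by_cases hmove : ∃ w, zLegal G ∅ hz w
  swap
  · exact Or.inl (not_exists.mp hmove)
  obtain ⟨w, hw⟩ := hmove
  refine Or.inr ⟨w, hw, ?_⟩
  rw [totDominatedBy_cons, dominatedBy_cons]
  exact (Set.union_subset (neighborSet_subset_dominatedBy_of_not_zLegal G hv) hR).trans
    Set.subset_union_right

end

theorem gammaZg_le_gammaTg_general {V : Type*} [Fintype V] (G : SimpleGraph V) :
    gammaZg G ≤ gammaTg G :=
  Nat.sInf_le (canEnd_zLegal_of_canEnd_tgLegal G
    (Nat.sInf_mem (s := {k | canEnd (tgLegal G) k true []}) ⟨_, canEnd_tgLegal_card G true⟩))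

/-- The game Z-domination number is at most the game total domination number. -/
theorem gammaZg_le_gammaTg {V : Type*} [Fintype V] (G : SimpleGraph V)
    (hG : isolateFree G) :
    gammaZg G ≤ gammaTg G :=
  gammaZg_le_gammaTg_general G
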